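/- arXiv:2110.13144 — 2 statements merged into one kernel-verified Lean document; each statement's English description precedes it below -/
import Mathlib

section
/- Let (Ω, 𝓕, P) be a probability space with a filtration 𝓕_0 ⊆ 𝓕_1 ⊆ ⋯ ⊆ 𝓕_K, and let ε_1, …, ε_K be ℝ^d-valued random vectors such that for each k ∈ {1,…,K}, ε_k is 𝓕_k-measurable, E[ε_k | 𝓕_{k−1}] = 0 almost surely, and ‖ε_k‖₂ ≤ B_k almost surely for a deterministic constant B_k ≥ 0. Then for every δ ∈ (0,1), with probability at least 1 − δ, ‖∑_{k=1}^K ε_k‖₂² ≤ 4 log(4/δ) ∑_{k=1}^K B_k². -/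
/-!
Write `S n = ε 1 + ⋯ + ε n`, `σ² = ∑ B k²` and `W n = √(‖S n‖² + B (n+1)² + ⋯ + B K²)`, so that
`W 0 = σ` and `W K = ‖S K‖`. Since `E[‖S (k-1) + ε k‖² | 𝓕 (k-1)] ≤ ‖S (k-1)‖² + B k²`, conditional
Jensen makes `W` a supermartingale, and both `W k` and `W (k-1)` lie within `B k` of the
`𝓕 (k-1)`-measurable quantity `√(‖S (k-1)‖² + B (k+1)² + ⋯ + B K²)`. Hence the increments of `W`
are supermartingale differences confined to predictable intervals of length `2 B k`, and the
Azuma–Hoeffding inequality gives `P(‖S K‖ ≥ σ + s) ≤ exp (-s² / (2σ²))`, with no dependence on the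
dimension. The choice `s = (2 √(log (4/δ)) - 1) σ` gives the stated bound.
-/

open MeasureTheory ProbabilityTheory Real

lemma one_sub_mul_exp_add_mul_exp_le {p t : ℝ} (hp₀ : 0 ≤ p) (hp₁ : p ≤ 1) :
    (1 - p) * exp (-p * t) + p * exp ((1 - p) * t) ≤ exp (t ^ 2 / 8) := by
  let q : unitInterval := ⟨p, hp₀, hp₁⟩
  have hmem : ∀ᵐ x ∂Ber(1 - p, -p, q), x ∈ Set.Icc (-p) (1 - p) := by
    rw [ae_iff]
    exact bernoulliMeasure_apply_of_notMem_of_notMem q measurableSet_Icc.compl (by simp)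
      (by simp)
  have hmean : ∫ x, x ∂Ber(1 - p, -p, q) = 0 := by
    rw [integral_bernoulliMeasure]; simp only [smul_eq_mul, mul_neg, q]; ring
  have hmgf := (hasSubgaussianMGF_of_mem_Icc_of_integral_eq_zero measurable_id.aemeasurable
    hmem hmean).mgf_le t
  rw [mgf, integral_bernoulliMeasure] at hmgf
  convert hmgf using 1
  · simp only [q, id, smul_eq_mul]; ring_nf
  · norm_num; ring

-- `(exp (l * c) - 1) / c` is the slope of the chord of `y ↦ exp (l * y)` over `[a, a + c]`; at
-- `c = 0` it is the junk value `0`, harmless since then `x = a`.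
lemma exp_mul_le_chord {l a c x : ℝ} (hx : x ∈ Set.Icc a (a + c)) :
    exp (l * x) ≤ exp (l * a) * (1 + (exp (l * c) - 1) / c * (x - a)) := by
  rcases hx.1.eq_or_lt with rfl | hax
  · simp
  have hc : 0 < c := by linarith [hx.2]
  have hconv : ConvexOn ℝ Set.univ fun y => exp (l * y) :=
    convexOn_exp.comp_linearMap (LinearMap.mul ℝ ℝ l)
  have hslope := hconv.secant_mono (Set.mem_univ a) (Set.mem_univ x) (Set.mem_univ (a + c))
    hax.ne' (by linarith) hx.2
  rw [add_sub_cancel_left, div_le_div_iff₀ (by linarith) hc] at hslope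
  have hrw : exp (l * a) * (1 + (exp (l * c) - 1) / c * (x - a))
      = exp (l * a) + (exp (l * (a + c)) - exp (l * a)) * (x - a) / c := by
    rw [mul_add l a c, exp_add]; ring
  rw [hrw, ← sub_le_iff_le_add', le_div_iff₀ hc]
  exact hslope

lemma exp_mul_chord_le {l a c y : ℝ} (hl : 0 ≤ l) (hy : y ∈ Set.Icc a (a + c)) (hy0 : y ≤ 0) :
    exp (l * a) * (1 + (exp (l * c) - 1) / c * (y - a)) ≤ exp (l ^ 2 * c ^ 2 / 8) := by
  rcases hy.1.eq_or_lt with rfl | hay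
  · simpa using exp_le_exp.2 (by nlinarith [sq_nonneg (l * c)] : l * a ≤ l ^ 2 * c ^ 2 / 8)
  have hc : 0 < c := by linarith [hy.2]
  set p := (y - a) / c
  have hp₀ : 0 ≤ p := div_nonneg (by linarith) hc.le
  have hp₁ : p ≤ 1 := (div_le_one hc).2 (by linarith [hy.2])
  have hchord : exp (l * a) * (1 + (exp (l * c) - 1) / c * (y - a))
      = exp (l * y) * ((1 - p) * exp (-p * (l * c)) + p * exp ((1 - p) * (l * c))) := by
    have hla : -p * (l * c) = l * a - l * y := by simp only [p]; field_simp; ring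
    rw [hla, show (1 - p) * (l * c) = l * a - l * y + l * c by linear_combination hla, exp_add,
      exp_sub]
    simp only [p]
    field_simp
    ring
  calc _ = _ := hchord
    _ ≤ 1 * exp ((l * c) ^ 2 / 8) :=
      mul_le_mul (exp_le_one_iff.2 (by nlinarith)) (one_sub_mul_exp_add_mul_exp_le hp₀ hp₁)
        (by positivity) zero_le_one
    _ = _ := by ring_nf

lemma abs_sqrt_sq_add_sub_sqrt_sq_add_le {u v A : ℝ} (hA : 0 ≤ A) :
    |√(u ^ 2 + A) - √(v ^ 2 + A)| ≤ |u - v| := by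
  wlog huv : √(v ^ 2 + A) ≤ √(u ^ 2 + A) generalizing u v
  · rw [abs_sub_comm, abs_sub_comm u]; exact this (le_of_not_ge huv)
  have hv : |v| ≤ √(v ^ 2 + A) := Real.abs_le_sqrt (by linarith)
  have hsq : √(v ^ 2 + A) ^ 2 = v ^ 2 + A := Real.sq_sqrt (by positivity)
  rw [abs_of_nonneg (sub_nonneg.2 huv), sub_le_iff_le_add, Real.sqrt_le_iff]
  refine ⟨by positivity, ?_⟩
  nlinarith [abs_mul_abs_self (u - v), abs_mul_abs_self v, abs_nonneg (u - v),
    mul_le_mul_of_nonneg_left hv (abs_nonneg (u - v)), abs_mul (u - v) v, le_abs_self ((u - v) * v)]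

lemma abs_sqrt_norm_sq_add_sub_le {E : Type*} [SeminormedAddCommGroup E] (x y : E) {A : ℝ}
    (hA : 0 ≤ A) : |√(‖x‖ ^ 2 + A) - √(‖y‖ ^ 2 + A)| ≤ ‖x - y‖ :=
  (abs_sqrt_sq_add_sub_sqrt_sq_add_le hA).trans (abs_norm_sub_norm_le x y)

lemma sum_Icc_one_sub {G : Type*} [AddCommGroup G] (f : ℕ → G) (n : ℕ) :
    ∑ k ∈ Finset.Icc 1 n, (f k - f (k - 1)) = f n - f 0 := by
  induction n with
  | zero => simp
  | succ n ih => rw [Finset.sum_Icc_succ_top (by omega), ih, Nat.add_sub_cancel]; abel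

lemma one_le_log_four : 1 ≤ log 4 := by
  rw [Real.le_log_iff_exp_le (by norm_num)]
  exact Real.exp_one_lt_d9.le.trans (by norm_num)

lemma exp_neg_two_sqrt_log_sub_one_sq_le {δ : ℝ} (hδ₀ : 0 < δ) (hδ₄ : δ ≤ 4) :
    exp (-(2 * √(log (4 / δ)) - 1) ^ 2 / 2) ≤ δ := by
  have hsq : √(log (4 / δ)) ^ 2 = log 4 - log δ := by
    rw [Real.sq_sqrt (Real.log_nonneg ((one_le_div hδ₀).2 hδ₄)), Real.log_div (by norm_num)
      hδ₀.ne']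
  rw [← Real.le_log_iff_exp_le hδ₀]
  nlinarith [sq_nonneg (√(log (4 / δ)) - 1), one_le_log_four]

section Conditional

variable {Ω : Type*} {m m0 : MeasurableSpace Ω} {μ : Measure Ω} [IsFiniteMeasure μ]

lemma ae_mem_Icc_condExp_of_mem_Icc (hm : m ≤ m0) {X a : Ω → ℝ} {c : ℝ}
    (ha : StronglyMeasurable[m] a) (haint : Integrable a μ) (hX : Integrable X μ)
    (hXa : ∀ᵐ ω ∂μ, X ω ∈ Set.Icc (a ω) (a ω + c)) :
    ∀ᵐ ω ∂μ, μ[X|m] ω ∈ Set.Icc (a ω) (a ω + c) := by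
  have hac : Integrable (fun ω => a ω + c) μ := haint.add (integrable_const c)
  have hlo := condExp_mono (m := m) haint hX (by filter_upwards [hXa] with ω h using h.1)
  have hhi := condExp_mono (m := m) hX hac (by filter_upwards [hXa] with ω h using h.2)
  rw [condExp_of_stronglyMeasurable hm ha haint] at hlo
  rw [condExp_of_stronglyMeasurable (f := fun ω => a ω + c) hm
    (ha.add stronglyMeasurable_const) hac] at hhi
  filter_upwards [hlo, hhi] with ω h₁ h₂ using ⟨h₁, h₂⟩

lemma condExp_exp_mul_le_chord (hm : m ≤ m0) {X a : Ω → ℝ} {l c R : ℝ} (hl : 0 ≤ l)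
    (ha : StronglyMeasurable[m] a) (haint : Integrable a μ) (hX : Integrable X μ)
    (hXR : ∀ᵐ ω ∂μ, X ω ≤ R) (hXa : ∀ᵐ ω ∂μ, X ω ∈ Set.Icc (a ω) (a ω + c)) :
    μ[fun ω => exp (l * X ω)|m]
      ≤ᵐ[μ] fun ω => exp (l * a ω) * (1 + (exp (l * c) - 1) / c * (μ[X|m] ω - a ω)) := by
  set κ := (exp (l * c) - 1) / c
  have hexpa : StronglyMeasurable[m] fun ω => exp (l * a ω) :=
    continuous_exp.comp_stronglyMeasurable (ha.const_mul l)
  have hexpa_le : ∀ᵐ ω ∂μ, ‖exp (l * a ω)‖ ≤ exp (l * R) := by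
    filter_upwards [hXR, hXa] with ω hR hω
    rw [norm_of_nonneg (exp_pos _).le, exp_le_exp]
    exact mul_le_mul_of_nonneg_left (hω.1.trans hR) hl
  have hline : Integrable (fun ω => 1 + κ * (X ω - a ω)) μ :=
    (integrable_const 1).add ((hX.sub haint).const_mul κ)
  have hexpX : Integrable (fun ω => exp (l * X ω)) μ := by
    refine .of_bound (continuous_exp.comp_aestronglyMeasurable
      (hX.aestronglyMeasurable.const_mul l)) (exp (l * R)) ?_
    filter_upwards [hXR] with ω hR
    rw [norm_of_nonneg (exp_pos _).le, exp_le_exp]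
    exact mul_le_mul_of_nonneg_left hR hl
  have hle : μ[fun ω => exp (l * X ω)|m]
      ≤ᵐ[μ] μ[fun ω => exp (l * a ω) * (1 + κ * (X ω - a ω))|m] :=
    condExp_mono hexpX (hline.bdd_mul (hexpa.mono hm).aestronglyMeasurable hexpa_le) (by
      filter_upwards [hXa] with ω hω using exp_mul_le_chord hω)
  have hlin : μ[fun ω => 1 + κ * (X ω - a ω)|m] =ᵐ[μ] fun ω => 1 + κ * (μ[X|m] ω - a ω) := by
    change μ[(fun _ => (1 : ℝ)) + κ • (X - a)|m] =ᵐ[μ] _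
    filter_upwards [condExp_add (m := m) (integrable_const (1 : ℝ)) ((hX.sub haint).smul κ),
      condExp_smul (μ := μ) (m := m) κ (X - a), condExp_sub (m := m) hX haint] with ω h₁ h₂ h₃
    rw [h₁, Pi.add_apply, condExp_const hm, h₂, Pi.smul_apply, h₃, Pi.sub_apply,
      condExp_of_stronglyMeasurable hm ha haint, smul_eq_mul]
  filter_upwards [hle, condExp_stronglyMeasurable_mul_of_bound hm hexpa hline _ hexpa_le, hlin]
    with ω h₁ h₂ h₃
  rw [← h₃]
  exact h₁.trans_eq h₂

lemma condExp_exp_mul_le_of_mem_Icc (hm : m ≤ m0) {X a : Ω → ℝ} {l c R : ℝ} (hl : 0 ≤ l)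
    (ha : StronglyMeasurable[m] a) (hX : AEStronglyMeasurable X μ)
    (hXR : ∀ᵐ ω ∂μ, |X ω| ≤ R) (hXa : ∀ᵐ ω ∂μ, X ω ∈ Set.Icc (a ω) (a ω + c))
    (hXm : μ[X|m] ≤ᵐ[μ] 0) :
    ∀ᵐ ω ∂μ, μ[fun ω => exp (l * X ω)|m] ω ≤ exp (l ^ 2 * c ^ 2 / 8) := by
  have hXint : Integrable X μ := .of_bound hX R (by simpa using hXR)
  have haint : Integrable a μ := by
    refine .of_bound (ha.mono hm).aestronglyMeasurable (R + |c|) ?_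
    filter_upwards [hXR, hXa] with ω hR hω
    rw [abs_le] at hR
    rw [Real.norm_eq_abs, abs_le]
    constructor <;> linarith [neg_abs_le c, le_abs_self c, hω.1, hω.2]
  filter_upwards [condExp_exp_mul_le_chord hm hl ha haint hXint
      (by filter_upwards [hXR] with ω h using (le_abs_self _).trans h) hXa,
    ae_mem_Icc_condExp_of_mem_Icc hm ha haint hXint hXa, hXm] with ω h₁ h₂ h₃
  exact h₁.trans (exp_mul_chord_le hl h₂ h₃)

end Conditional

section Azuma

variable {Ω : Type*} {m0 : MeasurableSpace Ω} {μ : Measure Ω}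

lemma integrable_exp_mul_sum [IsFiniteMeasure μ] {Y : ℕ → Ω → ℝ} {R : ℕ → ℝ} {s : Finset ℕ}
    (l : ℝ) (hY : ∀ k ∈ s, AEStronglyMeasurable (Y k) μ)
    (hYR : ∀ k ∈ s, ∀ᵐ ω ∂μ, |Y k ω| ≤ R k) :
    Integrable (fun ω => exp (l * ∑ k ∈ s, Y k ω)) μ := by
  refine .of_bound (continuous_exp.comp_aestronglyMeasurable
    ((Finset.aestronglyMeasurable_fun_sum s hY).const_mul l)) (exp (|l| * ∑ k ∈ s, R k)) ?_
  filter_upwards [(Filter.eventually_all_finset s).2 hYR] with ω hω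
  rw [norm_of_nonneg (exp_pos _).le, exp_le_exp]
  calc l * ∑ k ∈ s, Y k ω ≤ |l| * |∑ k ∈ s, Y k ω| := by rw [← abs_mul]; exact le_abs_self _
    _ ≤ |l| * ∑ k ∈ s, R k := by
      gcongr
      exact (Finset.abs_sum_le_sum_abs _ _).trans (Finset.sum_le_sum hω)

lemma integral_exp_mul_add_le [IsFiniteMeasure μ] {m : MeasurableSpace Ω} (hm : m ≤ m0)
    {Z Y : Ω → ℝ} {l C : ℝ} (hZ : StronglyMeasurable[m] Z)
    (hZY : Integrable (fun ω => exp (l * (Z ω + Y ω))) μ)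
    (hZint : Integrable (fun ω => exp (l * Z ω)) μ) (hYint : Integrable (fun ω => exp (l * Y ω)) μ)
    (hmgf : ∀ᵐ ω ∂μ, μ[fun ω => exp (l * Y ω)|m] ω ≤ exp C) :
    ∫ ω, exp (l * (Z ω + Y ω)) ∂μ ≤ (∫ ω, exp (l * Z ω) ∂μ) * exp C := by
  set F := fun ω => exp (l * Z ω)
  set G := fun ω => exp (l * Y ω)
  have hsplit : (fun ω => exp (l * (Z ω + Y ω))) = F * G := by
    ext ω; simp only [F, G, Pi.mul_apply, mul_add, exp_add]
  rw [hsplit] at hZY ⊢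
  have hpull : μ[F * G|m] =ᵐ[μ] F * μ[G|m] :=
    condExp_mul_of_stronglyMeasurable_left
      (continuous_exp.comp_stronglyMeasurable (hZ.const_mul l)) hZY hYint
  calc ∫ ω, (F * G) ω ∂μ = ∫ ω, μ[F * G|m] ω ∂μ := (integral_condExp hm).symm
    _ = ∫ ω, F ω * μ[G|m] ω ∂μ := integral_congr_ae hpull
    _ ≤ ∫ ω, F ω * exp C ∂μ := by
      refine integral_mono_ae (integrable_condExp.congr hpull) (hZint.mul_const _) ?_
      filter_upwards [hmgf] with ω hω
      exact mul_le_mul_of_nonneg_left hω (exp_pos _).le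
    _ = (∫ ω, F ω ∂μ) * exp C := integral_mul_const _ _

variable [IsProbabilityMeasure μ] {𝓕 : Filtration ℕ m0}

lemma integral_exp_mul_sum_le {Y : ℕ → Ω → ℝ} {R C : ℕ → ℝ} {l : ℝ} (n : ℕ)
    (hY : ∀ k ∈ Finset.Icc 1 n, StronglyMeasurable[𝓕 k] (Y k))
    (hYR : ∀ k ∈ Finset.Icc 1 n, ∀ᵐ ω ∂μ, |Y k ω| ≤ R k)
    (hmgf : ∀ k ∈ Finset.Icc 1 n,
      ∀ᵐ ω ∂μ, μ[fun ω => exp (l * Y k ω)|𝓕 (k - 1)] ω ≤ exp (C k)) :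
    ∫ ω, exp (l * ∑ k ∈ Finset.Icc 1 n, Y k ω) ∂μ ≤ exp (∑ k ∈ Finset.Icc 1 n, C k) := by
  induction n with
  | zero => simp
  | succ n ih =>
    have hsub : Finset.Icc 1 n ⊆ Finset.Icc 1 (n + 1) := Finset.Icc_subset_Icc le_rfl n.le_succ
    have hint : ∀ s ⊆ Finset.Icc 1 (n + 1),
        Integrable (fun ω => exp (l * ∑ k ∈ s, Y k ω)) μ := fun s hs =>
      integrable_exp_mul_sum l (fun k hk => ((hY k (hs hk)).mono (𝓕.le k)).aestronglyMeasurable)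
        fun k hk => hYR k (hs hk)
    have hlast : n + 1 ∈ Finset.Icc 1 (n + 1) := by simp
    have hfull := hint _ subset_rfl
    simp only [Finset.sum_Icc_succ_top (by omega : 1 ≤ n + 1), exp_add] at hfull ⊢
    refine (integral_exp_mul_add_le (𝓕.le n) (Finset.stronglyMeasurable_fun_sum _ fun k hk =>
      (hY k (hsub hk)).mono (𝓕.mono (Finset.mem_Icc.1 hk).2)) hfull (hint _ hsub)
      (by simpa using hint {n + 1} (by simp)) (by simpa using hmgf _ hlast)).trans ?_
    gcongr
    exact ih (fun k hk => hY k (hsub hk)) (fun k hk => hYR k (hsub hk))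
      fun k hk => hmgf k (hsub hk)

theorem measure_sum_ge_le_of_mem_Icc_of_condExp_nonpos {Y a : ℕ → Ω → ℝ} {R c : ℕ → ℝ}
    {n : ℕ} (hY : ∀ k ∈ Finset.Icc 1 n, StronglyMeasurable[𝓕 k] (Y k))
    (ha : ∀ k ∈ Finset.Icc 1 n, StronglyMeasurable[𝓕 (k - 1)] (a k))
    (hYR : ∀ k ∈ Finset.Icc 1 n, ∀ᵐ ω ∂μ, |Y k ω| ≤ R k)
    (hYa : ∀ k ∈ Finset.Icc 1 n, ∀ᵐ ω ∂μ, Y k ω ∈ Set.Icc (a k ω) (a k ω + c k))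
    (hYm : ∀ k ∈ Finset.Icc 1 n, μ[Y k|𝓕 (k - 1)] ≤ᵐ[μ] 0) {s : ℝ} (hs : 0 ≤ s) :
    μ.real {ω | s ≤ ∑ k ∈ Finset.Icc 1 n, Y k ω}
      ≤ exp (-2 * s ^ 2 / ∑ k ∈ Finset.Icc 1 n, c k ^ 2) := by
  set V := ∑ k ∈ Finset.Icc 1 n, c k ^ 2
  set l := 4 * s / V
  have hl : 0 ≤ l := div_nonneg (by positivity) (by positivity)
  have hYae : ∀ k ∈ Finset.Icc 1 n, AEStronglyMeasurable (Y k) μ :=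
    fun k hk => ((hY k hk).mono (𝓕.le k)).aestronglyMeasurable
  calc μ.real {ω | s ≤ ∑ k ∈ Finset.Icc 1 n, Y k ω}
      ≤ exp (-l * s) * mgf (fun ω => ∑ k ∈ Finset.Icc 1 n, Y k ω) μ l :=
        measure_ge_le_exp_mul_mgf s hl (integrable_exp_mul_sum l hYae hYR)
    _ ≤ exp (-l * s) * exp (∑ k ∈ Finset.Icc 1 n, l ^ 2 * c k ^ 2 / 8) := by
      gcongr
      exact integral_exp_mul_sum_le n hY hYR fun k hk =>
        condExp_exp_mul_le_of_mem_Icc (𝓕.le _) hl (ha k hk) (hYae k hk) (hYR k hk) (hYa k hk)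
          (hYm k hk)
    _ = exp (-2 * s ^ 2 / V) := by
      rw [← exp_add, ← Finset.sum_div, ← Finset.mul_sum]
      congr 1
      rcases eq_or_ne V 0 with h | h
      · simp [l, h]
      · simp only [l]; field_simp; ring

end Azuma

section ConditionalSecondMoment

variable {Ω : Type*} {m m0 : MeasurableSpace Ω} {μ : Measure Ω} [IsFiniteMeasure μ]

lemma sq_condExp_le_condExp_sq (hm : m ≤ m0) {X : Ω → ℝ} (hX : MemLp X 2 μ) :
    μ[X|m] ^ 2 ≤ᵐ[μ] μ[X ^ 2|m] := by
  filter_upwards [condVar_ae_eq_condExp_sq_sub_sq_condExp hm hX,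
    condExp_nonneg (m := m) (f := (X - μ[X|m]) ^ 2)
      (ae_of_all μ fun ω => sq_nonneg ((X - μ[X|m]) ω))] with ω h₁ h₂
  rw [condVar] at h₁
  simp only [Pi.sub_apply, Pi.pow_apply, Pi.zero_apply] at h₁ h₂ ⊢
  linarith

variable {E : Type*} [NormedAddCommGroup E] [InnerProductSpace ℝ E] [CompleteSpace E]

lemma condExp_norm_add_sq_le (hm : m ≤ m0) {v g : Ω → E} {M b : ℝ}
    (hv : StronglyMeasurable[m] v) (hvM : ∀ᵐ ω ∂μ, ‖v ω‖ ≤ M)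
    (hg : AEStronglyMeasurable g μ) (hgb : ∀ᵐ ω ∂μ, ‖g ω‖ ≤ b) (hg0 : μ[g|m] =ᵐ[μ] 0) :
    μ[fun ω => ‖v ω + g ω‖ ^ 2|m] ≤ᵐ[μ] fun ω => ‖v ω‖ ^ 2 + b ^ 2 := by
  have hv' : AEStronglyMeasurable v μ := (hv.mono hm).aestronglyMeasurable
  have hgint : Integrable g μ := .of_bound hg b hgb
  have hvsq : Integrable (fun ω => ‖v ω‖ ^ 2) μ :=
    (memLp_two_iff_integrable_sq_norm hv').1 (.of_bound hv' M hvM)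
  have hinner : Integrable (fun ω => 2 * inner ℝ (v ω) (g ω)) μ := by
    refine .of_bound ((hv'.inner hg).const_mul 2) (2 * (M * b)) ?_
    filter_upwards [hvM, hgb] with ω h₁ h₂
    rw [norm_mul, Real.norm_two]
    gcongr
    exact (norm_inner_le_norm _ _).trans
      (mul_le_mul h₁ h₂ (norm_nonneg _) ((norm_nonneg _).trans h₁))
  have hgsq : Integrable (fun ω => ‖g ω‖ ^ 2) μ :=
    (memLp_two_iff_integrable_sq_norm hg).1 (.of_bound hg b hgb)
  have hcross : μ[fun ω => 2 * inner ℝ (v ω) (g ω)|m] =ᵐ[μ] 0 := by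
    have h : μ[fun ω => 2 * inner ℝ (v ω) (g ω)|m]
        =ᵐ[μ] fun ω => 2 * inner ℝ (v ω) (μ[g|m] ω) :=
      condExp_bilin_of_stronglyMeasurable_left ((2 : ℝ) • innerSL ℝ) hv hinner hgint
    filter_upwards [h, hg0] with ω h₁ h₂
    rw [h₁, h₂, Pi.zero_apply, inner_zero_right, mul_zero, Pi.zero_apply]
  have hsq_le : ∀ᵐ ω ∂μ, μ[fun ω => ‖g ω‖ ^ 2|m] ω ≤ b ^ 2 :=
    condExp_le_nonneg_const (sq_nonneg b) (by
      filter_upwards [hgb] with ω hω using pow_le_pow_left₀ (norm_nonneg _) hω 2)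
  have hsplit : (fun ω => ‖v ω + g ω‖ ^ 2) = (fun ω => ‖v ω‖ ^ 2)
      + (fun ω => 2 * inner ℝ (v ω) (g ω)) + fun ω => ‖g ω‖ ^ 2 := by
    ext ω; exact norm_add_sq_real _ _
  rw [hsplit]
  filter_upwards [condExp_add (m := m) (hvsq.add hinner) hgsq,
    condExp_add (m := m) hvsq hinner, hcross, hsq_le] with ω h₁ h₂ h₃ h₄
  rw [h₁, Pi.add_apply, h₂, Pi.add_apply, h₃, Pi.zero_apply,
    condExp_of_stronglyMeasurable (f := fun ω => ‖v ω‖ ^ 2) hm (hv.norm.pow 2) hvsq]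
  linarith

lemma condExp_sqrt_norm_add_sq_add_le (hm : m ≤ m0) {v g : Ω → E} {M b A : ℝ} (hA : 0 ≤ A)
    (hv : StronglyMeasurable[m] v) (hvM : ∀ᵐ ω ∂μ, ‖v ω‖ ≤ M)
    (hg : AEStronglyMeasurable g μ) (hgb : ∀ᵐ ω ∂μ, ‖g ω‖ ≤ b) (hg0 : μ[g|m] =ᵐ[μ] 0) :
    μ[fun ω => √(‖v ω + g ω‖ ^ 2 + A)|m] ≤ᵐ[μ] fun ω => √(‖v ω‖ ^ 2 + b ^ 2 + A) := by
  set Z := fun ω => √(‖v ω + g ω‖ ^ 2 + A)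
  have hZsq : Z ^ 2 = fun ω => ‖v ω + g ω‖ ^ 2 + A := by
    ext ω; exact Real.sq_sqrt (by positivity)
  have hZ : MemLp Z 2 μ := by
    refine .of_bound (continuous_sqrt.comp_aestronglyMeasurable
      ((((hv.mono hm).aestronglyMeasurable.add hg).norm.pow 2).add_const A))
      (√((M + b) ^ 2 + A)) ?_
    filter_upwards [hvM, hgb] with ω h₁ h₂
    rw [Real.norm_of_nonneg (Real.sqrt_nonneg _)]
    gcongr
    exact (norm_add_le _ _).trans (add_le_add h₁ h₂)
  have hnorm_int : Integrable (fun ω => ‖v ω + g ω‖ ^ 2) μ := by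
    refine (hZ.integrable_sq.sub (integrable_const A)).congr (ae_of_all _ fun ω => ?_)
    simp [show Z ω ^ 2 = _ from congr_fun hZsq ω]
  filter_upwards [sq_condExp_le_condExp_sq hm hZ, condExp_add (m := m) hnorm_int
    (integrable_const A), condExp_norm_add_sq_le hm hv hvM hg hgb hg0] with ω h₁ h₂ h₃
  rw [hZsq] at h₁
  change _ ≤ μ[(fun ω => ‖v ω + g ω‖ ^ 2) + fun _ => A|m] ω at h₁
  rw [h₂, Pi.add_apply, condExp_const hm] at h₁
  exact (le_abs_self _).trans (Real.abs_le_sqrt (by simp only [Pi.pow_apply] at h₁; linarith))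

end ConditionalSecondMoment

section AugmentedNorm

variable {Ω E : Type*} [NormedAddCommGroup E]

-- The norm of `(S n, √(B (n+1)² + ⋯ + B K²))` in `E × ℝ`.
noncomputable def augmentedNorm (ε : ℕ → Ω → E) (B : ℕ → ℝ) (K n : ℕ) (ω : Ω) : ℝ :=
  √(‖∑ k ∈ Finset.Icc 1 n, ε k ω‖ ^ 2 + ∑ k ∈ Finset.Ioc n K, B k ^ 2)

variable {ε : ℕ → Ω → E} {B : ℕ → ℝ} {K : ℕ}

lemma augmentedNorm_zero (ω : Ω) :
    augmentedNorm ε B K 0 ω = √(∑ k ∈ Finset.Icc 1 K, B k ^ 2) := by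
  simp [augmentedNorm, ← Finset.Icc_add_one_left_eq_Ioc]

lemma augmentedNorm_self (ω : Ω) :
    augmentedNorm ε B K K ω = ‖∑ k ∈ Finset.Icc 1 K, ε k ω‖ := by
  simp [augmentedNorm]

lemma augmentedNorm_of_mem_Icc {k : ℕ} (hk : k ∈ Finset.Icc 1 K) (ω : Ω) :
    augmentedNorm ε B K k ω = √(‖∑ j ∈ Finset.Icc 1 (k - 1), ε j ω + ε k ω‖ ^ 2
      + ∑ j ∈ Finset.Ioc k K, B j ^ 2) := by
  obtain ⟨j, rfl⟩ : ∃ j, k = j + 1 := ⟨k - 1, by grind⟩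
  rw [augmentedNorm, Finset.sum_Icc_succ_top (by omega), Nat.add_sub_cancel]

lemma augmentedNorm_sub_one_of_mem_Icc {k : ℕ} (hk : k ∈ Finset.Icc 1 K) (ω : Ω) :
    augmentedNorm ε B K (k - 1) ω = √(‖∑ j ∈ Finset.Icc 1 (k - 1), ε j ω‖ ^ 2 + B k ^ 2
      + ∑ j ∈ Finset.Ioc k K, B j ^ 2) := by
  obtain ⟨j, rfl⟩ : ∃ j, k = j + 1 := ⟨k - 1, by grind⟩
  rw [augmentedNorm, Nat.add_sub_cancel, ← Finset.Icc_add_one_left_eq_Ioc,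
    ← Finset.add_sum_Ioc_eq_sum_Icc (f := fun j => B j ^ 2) (Finset.mem_Icc.1 hk).2, add_assoc]

lemma abs_augmentedNorm_sub_le {k : ℕ} (hk : k ∈ Finset.Icc 1 K) {ω : Ω}
    (hε : ‖ε k ω‖ ≤ B k) :
    |augmentedNorm ε B K k ω - √(‖∑ j ∈ Finset.Icc 1 (k - 1), ε j ω‖ ^ 2
        + ∑ j ∈ Finset.Ioc k K, B j ^ 2)| ≤ B k ∧
      |augmentedNorm ε B K (k - 1) ω - √(‖∑ j ∈ Finset.Icc 1 (k - 1), ε j ω‖ ^ 2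
        + ∑ j ∈ Finset.Ioc k K, B j ^ 2)| ≤ B k := by
  have hA : 0 ≤ ∑ j ∈ Finset.Ioc k K, B j ^ 2 := by positivity
  constructor
  · rw [augmentedNorm_of_mem_Icc hk]
    exact (abs_sqrt_norm_sq_add_sub_le _ _ hA).trans (by rwa [add_sub_cancel_left])
  · have h := abs_sqrt_sq_add_sub_sqrt_sq_add_le (u := B k) (v := 0)
      (add_nonneg (sq_nonneg ‖∑ j ∈ Finset.Icc 1 (k - 1), ε j ω‖) hA)
    rw [augmentedNorm_sub_one_of_mem_Icc hk]
    simp only [sub_zero, ne_eq, OfNat.ofNat_ne_zero, not_false_eq_true, zero_pow, zero_add,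
      abs_of_nonneg ((norm_nonneg _).trans hε)] at h
    convert h using 4; ring

lemma ae_norm_sum_Icc_le {m0 : MeasurableSpace Ω} {μ : Measure Ω}
    (hbound : ∀ k ∈ Finset.Icc 1 K, ∀ᵐ ω ∂μ, ‖ε k ω‖ ≤ B k) {n : ℕ} (hn : n ≤ K) :
    ∀ᵐ ω ∂μ, ‖∑ k ∈ Finset.Icc 1 n, ε k ω‖ ≤ ∑ k ∈ Finset.Icc 1 K, B k := by
  filter_upwards [(Filter.eventually_all_finset _).2 hbound] with ω hω
  calc ‖∑ k ∈ Finset.Icc 1 n, ε k ω‖ ≤ ∑ k ∈ Finset.Icc 1 n, ‖ε k ω‖ := norm_sum_le _ _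
    _ ≤ ∑ k ∈ Finset.Icc 1 K, ‖ε k ω‖ :=
      Finset.sum_le_sum_of_subset_of_nonneg (Finset.Icc_subset_Icc le_rfl hn)
        fun _ _ _ => norm_nonneg _
    _ ≤ ∑ k ∈ Finset.Icc 1 K, B k := Finset.sum_le_sum hω

lemma ae_sum_Icc_eq_zero {m0 : MeasurableSpace Ω} {μ : Measure Ω}
    (hbound : ∀ k ∈ Finset.Icc 1 K, ∀ᵐ ω ∂μ, ‖ε k ω‖ ≤ B k)
    (hB : ∑ k ∈ Finset.Icc 1 K, B k ^ 2 = 0) : ∀ᵐ ω ∂μ, ∑ k ∈ Finset.Icc 1 K, ε k ω = 0 := by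
  have hB₀ : ∀ k ∈ Finset.Icc 1 K, B k = 0 := fun k hk => pow_eq_zero_iff two_ne_zero |>.1 <|
    (Finset.sum_eq_zero_iff_of_nonneg fun k _ => sq_nonneg (B k)).1 hB k hk
  filter_upwards [ae_norm_sum_Icc_le hbound le_rfl] with ω hω
  rwa [Finset.sum_eq_zero hB₀, norm_le_zero_iff] at hω

variable {m0 : MeasurableSpace Ω} {𝓕 : Filtration ℕ m0}

lemma stronglyMeasurable_sum_Icc (hmeas : ∀ k ∈ Finset.Icc 1 K, StronglyMeasurable[𝓕 k] (ε k))
    {n : ℕ} (hn : n ≤ K) : StronglyMeasurable[𝓕 n] fun ω => ∑ k ∈ Finset.Icc 1 n, ε k ω := by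
  refine Finset.stronglyMeasurable_fun_sum _ fun k hk => ?_
  obtain ⟨hk₁, hk₂⟩ := Finset.mem_Icc.1 hk
  exact (hmeas k (Finset.mem_Icc.2 ⟨hk₁, hk₂.trans hn⟩)).mono (𝓕.mono hk₂)

lemma stronglyMeasurable_augmentedNorm
    (hmeas : ∀ k ∈ Finset.Icc 1 K, StronglyMeasurable[𝓕 k] (ε k)) {n : ℕ} (hn : n ≤ K) :
    StronglyMeasurable[𝓕 n] (augmentedNorm ε B K n) :=
  continuous_sqrt.comp_stronglyMeasurable
    (((stronglyMeasurable_sum_Icc hmeas hn).norm.pow 2).add_const _)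

lemma integrable_augmentedNorm {μ : Measure Ω} [IsFiniteMeasure μ]
    (hmeas : ∀ k ∈ Finset.Icc 1 K, StronglyMeasurable[𝓕 k] (ε k))
    (hbound : ∀ k ∈ Finset.Icc 1 K, ∀ᵐ ω ∂μ, ‖ε k ω‖ ≤ B k) {n : ℕ} (hn : n ≤ K) :
    Integrable (augmentedNorm ε B K n) μ := by
  refine .of_bound ((stronglyMeasurable_augmentedNorm hmeas hn).mono (𝓕.le n)).aestronglyMeasurable
    (√((∑ k ∈ Finset.Icc 1 K, B k) ^ 2 + ∑ k ∈ Finset.Icc 1 K, B k ^ 2)) ?_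
  filter_upwards [ae_norm_sum_Icc_le hbound hn] with ω hω
  rw [augmentedNorm, Real.norm_of_nonneg (Real.sqrt_nonneg _)]
  gcongr
  exact fun k hk => by grind

end AugmentedNorm

section Pinelis

variable {Ω E : Type*} [NormedAddCommGroup E] [InnerProductSpace ℝ E] [CompleteSpace E]
  {m0 : MeasurableSpace Ω} {μ : Measure Ω} {𝓕 : Filtration ℕ m0}
  {ε : ℕ → Ω → E} {B : ℕ → ℝ} {K : ℕ}

lemma condExp_augmentedNorm_sub_nonpos [IsFiniteMeasure μ]
    (hmeas : ∀ k ∈ Finset.Icc 1 K, StronglyMeasurable[𝓕 k] (ε k))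
    (hcond : ∀ k ∈ Finset.Icc 1 K, μ[ε k|𝓕 (k - 1)] =ᵐ[μ] 0)
    (hbound : ∀ k ∈ Finset.Icc 1 K, ∀ᵐ ω ∂μ, ‖ε k ω‖ ≤ B k) {k : ℕ} (hk : k ∈ Finset.Icc 1 K) :
    μ[fun ω => augmentedNorm ε B K k ω - augmentedNorm ε B K (k - 1) ω|𝓕 (k - 1)] ≤ᵐ[μ] 0 := by
  have hkK : k ≤ K := (Finset.mem_Icc.1 hk).2
  have hstep := condExp_sqrt_norm_add_sq_add_le (𝓕.le (k - 1)) (by positivity)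
    (stronglyMeasurable_sum_Icc hmeas (by omega)) (ae_norm_sum_Icc_le hbound (by omega))
    ((hmeas k hk).mono (𝓕.le k)).aestronglyMeasurable (hbound k hk) (hcond k hk)
    (A := ∑ j ∈ Finset.Ioc k K, B j ^ 2)
  rw [← funext (augmentedNorm_of_mem_Icc hk)] at hstep
  filter_upwards [condExp_sub (m := 𝓕 (k - 1)) (integrable_augmentedNorm hmeas hbound hkK)
    (integrable_augmentedNorm hmeas hbound (n := k - 1) (by omega)), hstep] with ω h₁ h₂
  change μ[augmentedNorm ε B K k - augmentedNorm ε B K (k - 1)|𝓕 (k - 1)] ω ≤ 0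
  rw [h₁, Pi.sub_apply, condExp_of_stronglyMeasurable (𝓕.le _)
    (stronglyMeasurable_augmentedNorm hmeas (by omega)) (integrable_augmentedNorm hmeas hbound
    (n := k - 1) (by omega)), sub_nonpos, augmentedNorm_sub_one_of_mem_Icc hk]
  exact h₂

theorem measure_norm_sum_ge_le [IsProbabilityMeasure μ]
    (hmeas : ∀ k ∈ Finset.Icc 1 K, StronglyMeasurable[𝓕 k] (ε k))
    (hcond : ∀ k ∈ Finset.Icc 1 K, μ[ε k|𝓕 (k - 1)] =ᵐ[μ] 0)
    (hbound : ∀ k ∈ Finset.Icc 1 K, ∀ᵐ ω ∂μ, ‖ε k ω‖ ≤ B k) {s : ℝ} (hs : 0 ≤ s) :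
    μ.real {ω | √(∑ k ∈ Finset.Icc 1 K, B k ^ 2) + s ≤ ‖∑ k ∈ Finset.Icc 1 K, ε k ω‖}
      ≤ exp (-s ^ 2 / (2 * ∑ k ∈ Finset.Icc 1 K, B k ^ 2)) := by
  set W := augmentedNorm ε B K
  set V := fun k ω => √(‖∑ j ∈ Finset.Icc 1 (k - 1), ε j ω‖ ^ 2 + ∑ j ∈ Finset.Ioc k K, B j ^ 2)
  have hWV : ∀ k ∈ Finset.Icc 1 K, ∀ᵐ ω ∂μ, |W k ω - V k ω| ≤ B k ∧ |W (k - 1) ω - V k ω| ≤ B k :=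
    fun k hk => by
      filter_upwards [hbound k hk] with ω hω using abs_augmentedNorm_sub_le hk hω
  have hW : ∀ k ∈ Finset.Icc 1 K, StronglyMeasurable[𝓕 k] (W k) :=
    fun k hk => stronglyMeasurable_augmentedNorm hmeas (Finset.mem_Icc.1 hk).2
  have hazuma := measure_sum_ge_le_of_mem_Icc_of_condExp_nonpos (μ := μ) (𝓕 := 𝓕)
    (Y := fun k ω => W k ω - W (k - 1) ω) (a := fun k ω => V k ω - B k - W (k - 1) ω)
    (R := fun k => 2 * B k) (c := fun k => 2 * B k) (n := K)
    (fun k hk => (hW k hk).sub ((stronglyMeasurable_augmentedNorm hmeas (by grind)).mono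
      (𝓕.mono (Nat.sub_le k 1))))
    (fun k hk => ((continuous_sqrt.comp_stronglyMeasurable
      (((stronglyMeasurable_sum_Icc hmeas (by grind)).norm.pow 2).add_const _)).sub
      stronglyMeasurable_const).sub (stronglyMeasurable_augmentedNorm hmeas (by grind)))
    (fun k hk => by
      filter_upwards [hWV k hk] with ω ⟨h₁, h₂⟩
      rw [abs_le] at h₁ h₂ ⊢
      constructor <;> linarith)
    (fun k hk => by
      filter_upwards [hWV k hk] with ω ⟨h₁, h₂⟩
      rw [abs_le] at h₁ h₂
      constructor <;> linarith)
    (fun k hk => condExp_augmentedNorm_sub_nonpos hmeas hcond hbound hk) hs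
  have hsum : ∑ k ∈ Finset.Icc 1 K, (2 * B k) ^ 2 = 4 * ∑ k ∈ Finset.Icc 1 K, B k ^ 2 := by
    simp only [mul_pow, ← Finset.mul_sum]; norm_num
  convert hazuma using 2
  · ext ω
    simp only [Set.mem_ofPred_eq, sum_Icc_one_sub (W · ω), W, augmentedNorm_self,
      augmentedNorm_zero, le_sub_iff_add_le']
  · rw [hsum]; ring

theorem measure_norm_sum_sq_gt_le [IsProbabilityMeasure μ]
    (hmeas : ∀ k ∈ Finset.Icc 1 K, StronglyMeasurable[𝓕 k] (ε k))
    (hcond : ∀ k ∈ Finset.Icc 1 K, μ[ε k|𝓕 (k - 1)] =ᵐ[μ] 0)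
    (hbound : ∀ k ∈ Finset.Icc 1 K, ∀ᵐ ω ∂μ, ‖ε k ω‖ ≤ B k) {δ : ℝ} (hδ₀ : 0 < δ) (hδ₁ : δ ≤ 1) :
    μ.real {ω | 4 * log (4 / δ) * ∑ k ∈ Finset.Icc 1 K, B k ^ 2
      < ‖∑ k ∈ Finset.Icc 1 K, ε k ω‖ ^ 2} ≤ δ := by
  set σ := √(∑ k ∈ Finset.Icc 1 K, B k ^ 2)
  set r := √(log (4 / δ))
  have hσ2 : σ ^ 2 = ∑ k ∈ Finset.Icc 1 K, B k ^ 2 := Real.sq_sqrt (by positivity)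
  have hr2 : r ^ 2 = log (4 / δ) := Real.sq_sqrt (Real.log_nonneg (by
    rw [le_div_iff₀ hδ₀]; linarith))
  have hσ₀ : 0 ≤ σ := Real.sqrt_nonneg _
  rcases hσ₀.eq_or_lt with hσ | hσ
  · have hsum : ∑ k ∈ Finset.Icc 1 K, B k ^ 2 = 0 := by rw [← hσ2, ← hσ]; ring
    rw [measureReal_def, measure_eq_zero_iff_ae_notMem.2 (by
      filter_upwards [ae_sum_Icc_eq_zero hbound hsum] with ω hω
      simp [hω, hsum])]
    exact hδ₀.le
  have hr : 1 ≤ r := Real.one_le_sqrt.2 (one_le_log_four.trans (Real.log_le_log (by norm_num)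
    (by rw [le_div_iff₀ hδ₀]; nlinarith)))
  have hsub : {ω | 4 * log (4 / δ) * ∑ k ∈ Finset.Icc 1 K, B k ^ 2
      < ‖∑ k ∈ Finset.Icc 1 K, ε k ω‖ ^ 2}
      ⊆ {ω | σ + (2 * r - 1) * σ ≤ ‖∑ k ∈ Finset.Icc 1 K, ε k ω‖} := by
    intro ω hω
    simp only [Set.mem_ofPred_eq, ← hσ2, ← hr2] at hω ⊢
    nlinarith [norm_nonneg (∑ k ∈ Finset.Icc 1 K, ε k ω)]
  have hexp : ((2 * r - 1) * σ) ^ 2 / (2 * ∑ k ∈ Finset.Icc 1 K, B k ^ 2)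
      = (2 * r - 1) ^ 2 / 2 := by
    rw [← hσ2]; field_simp [hσ.ne']
  calc _ ≤ _ := measureReal_mono hsub
    _ ≤ exp (-((2 * r - 1) * σ) ^ 2 / (2 * ∑ k ∈ Finset.Icc 1 K, B k ^ 2)) :=
      measure_norm_sum_ge_le hmeas hcond hbound (mul_nonneg (by linarith) hσ.le)
    _ ≤ δ := by
      rw [neg_div, hexp, ← neg_div]
      exact exp_neg_two_sqrt_log_sub_one_sq_le hδ₀ (by linarith)

end Pinelis

theorem azuma_hoeffding_vector_general
    {Ω : Type*} {m0 : MeasurableSpace Ω} {P : Measure Ω} [IsProbabilityMeasure P]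
    {d K : ℕ} (𝓕 : Filtration ℕ m0)
    (ε : ℕ → Ω → EuclideanSpace ℝ (Fin d)) (B : ℕ → ℝ)
    (hmeas : ∀ k, k ∈ Finset.Icc 1 K → StronglyMeasurable[𝓕 k] (ε k))
    (hcond : ∀ k, k ∈ Finset.Icc 1 K → P[ε k | 𝓕 (k - 1)] =ᵐ[P] 0)
    (hbound : ∀ k, k ∈ Finset.Icc 1 K → ∀ᵐ ω ∂P, ‖ε k ω‖ ≤ B k)
    (δ : ℝ) (hδ : δ ∈ Set.Ioo (0 : ℝ) 1) :
    ENNReal.ofReal (1 - δ) ≤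
      P {ω | ‖∑ k ∈ Finset.Icc 1 K, ε k ω‖ ^ 2 ≤
        4 * Real.log (4 / δ) * ∑ k ∈ Finset.Icc 1 K, (B k) ^ 2} := by
  obtain ⟨hδ₀, hδ₁⟩ := hδ
  have hbad := measure_norm_sum_sq_gt_le hmeas hcond hbound hδ₀ hδ₁.le
  rw [ENNReal.ofReal_sub _ hδ₀.le, ENNReal.ofReal_one, tsub_le_iff_right, ← measure_univ (μ := P)]
  refine (measure_univ_le_add_compl _).trans (add_le_add_right ?_ _)
  rw [← ofReal_measureReal]
  simpa only [Set.compl_ofPred, not_le] using ENNReal.ofReal_le_ofReal hbad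

/-- Vector-valued Azuma–Hoeffding inequality (Pinelis): for an `ℝ^d`-valued martingale
difference sequence `ε_1, …, ε_K` with `‖ε_k‖ ≤ B_k` almost surely, with probability at
least `1 - δ` one has `‖∑ ε_k‖² ≤ 4 log(4/δ) ∑ B_k²`. -/
theorem azuma_hoeffding_vector
    {Ω : Type*} {m0 : MeasurableSpace Ω} {P : Measure Ω} [IsProbabilityMeasure P]
    {d K : ℕ} (𝓕 : Filtration ℕ m0)
    (ε : ℕ → Ω → EuclideanSpace ℝ (Fin d)) (B : ℕ → ℝ)
    (hB : ∀ k, k ∈ Finset.Icc 1 K → 0 ≤ B k)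
    (hmeas : ∀ k, k ∈ Finset.Icc 1 K → StronglyMeasurable[𝓕 k] (ε k))
    (hcond : ∀ k, k ∈ Finset.Icc 1 K → P[ε k | 𝓕 (k - 1)] =ᵐ[P] 0)
    (hbound : ∀ k, k ∈ Finset.Icc 1 K → ∀ᵐ ω ∂P, ‖ε k ω‖ ≤ B k)
    (δ : ℝ) (hδ : δ ∈ Set.Ioo (0 : ℝ) 1) :
    ENNReal.ofReal (1 - δ) ≤
      P {ω | ‖∑ k ∈ Finset.Icc 1 K, ε k ω‖ ^ 2 ≤
        4 * Real.log (4 / δ) * ∑ k ∈ Finset.Icc 1 K, (B k) ^ 2} :=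
  azuma_hoeffding_vector_general 𝓕 ε B hmeas hcond hbound δ hδ
end

section
/- Let F : ℝ^d → ℝ be L-smooth and let ε > 0. Fix x, d ∈ ℝ^d with ‖d‖₂ ≥ ε and ‖d − ∇F(x)‖₂ ≤ ε/2, let 0 < η ≤ ε/(2L), and set x' = x − (η/‖d‖₂) d. Then F(x') ≤ F(x) − η ε / 8. -/
/-!
The descent lemma `f y ≤ f x + ⟪∇f x, y - x⟫ + L/2 ‖y - x‖²` holds because the gap between `f`
and this quadratic model along the segment `t ↦ x + t v`, `v = y - x`, has derivative
`⟪∇f(x + t v) - ∇f x, v⟫ - L t ‖v‖² ≤ 0` for `t ≥ 0`. Along the normalized step the linear term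
gains `⟪∇F x, d⟫ / ‖d‖ ≥ ‖d‖ - ‖d - ∇F x‖ ≥ ε/2` per unit length, while the quadratic term costs
at most `L η / 2 ≤ ε/4`, leaving a decrease of at least `η ε / 4`.
-/

open scoped RealInnerProductSpace Gradient
open Set

section InnerProductSpace

variable {E : Type*} [NormedAddCommGroup E] [InnerProductSpace ℝ E]

theorem norm_mul_sub_norm_sub_le_inner (g d : E) : ‖d‖ * (‖d‖ - ‖d - g‖) ≤ ⟪g, d⟫ := by
  have : ⟪d - g, d⟫ ≤ ‖d - g‖ * ‖d‖ := real_inner_le_norm _ _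
  rw [inner_sub_left, real_inner_self_eq_norm_sq] at this
  linarith

variable [CompleteSpace E] {f : E → ℝ} {L : ℝ}

theorem hasDerivAt_comp_add_smul {x v : E} {t : ℝ} (hf : DifferentiableAt ℝ f (x + t • v)) :
    HasDerivAt (fun s : ℝ => f (x + s • v)) ⟪∇ f (x + t • v), v⟫ t := by
  have hline : HasDerivAt (fun s : ℝ => x + s • v) v t := by
    simpa using ((hasDerivAt_id t).smul_const v).const_add x
  have := hf.hasGradientAt.hasFDerivAt.comp_hasDerivAt t hline
  rwa [InnerProductSpace.toDual_apply_apply] at this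

theorem le_add_inner_gradient_add_sq (hf : Differentiable ℝ f)
    (hlip : ∀ x y, ‖∇ f x - ∇ f y‖ ≤ L * ‖x - y‖) (x y : E) :
    f y ≤ f x + ⟪∇ f x, y - x⟫ + L / 2 * ‖y - x‖ ^ 2 := by
  set v := y - x
  let gap : ℝ → ℝ := fun t => f (x + t • v) - t * ⟪∇ f x, v⟫ - L / 2 * t ^ 2 * ‖v‖ ^ 2
  have hgap : ∀ t, HasDerivAt gap (⟪∇ f (x + t • v) - ∇ f x, v⟫ - L * t * ‖v‖ ^ 2) t := by
    intro t
    refine (((hasDerivAt_comp_add_smul (hf _)).sub ((hasDerivAt_id t).mul_const _)).sub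
      (((hasDerivAt_pow 2 t).const_mul (L / 2)).mul_const (‖v‖ ^ 2))).congr_deriv ?_
    rw [inner_sub_left]
    push_cast
    ring
  have hgap_nonpos : ∀ t ∈ interior (Ici (0 : ℝ)),
      ⟪∇ f (x + t • v) - ∇ f x, v⟫ - L * t * ‖v‖ ^ 2 ≤ 0 := by
    intro t ht
    rw [interior_Ici, mem_Ioi] at ht
    have hbound : ⟪∇ f (x + t • v) - ∇ f x, v⟫ ≤ L * t * ‖v‖ ^ 2 := calc
      _ ≤ ‖∇ f (x + t • v) - ∇ f x‖ * ‖v‖ := real_inner_le_norm _ _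
      _ ≤ L * ‖x + t • v - x‖ * ‖v‖ := mul_le_mul_of_nonneg_right (hlip _ _) (norm_nonneg v)
      _ = L * t * ‖v‖ ^ 2 := by
        rw [add_sub_cancel_left, norm_smul, Real.norm_of_nonneg ht.le]
        ring
    linarith
  have hanti : AntitoneOn gap (Ici 0) :=
    antitoneOn_of_hasDerivWithinAt_nonpos (convex_Ici 0)
      (fun t _ => (hgap t).continuousAt.continuousWithinAt)
      (fun t _ => (hgap t).hasDerivWithinAt) hgap_nonpos
  have := hanti self_mem_Ici (mem_Ici.mpr zero_le_one) zero_le_one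
  simp only [gap, v, zero_smul, add_zero, one_smul, add_sub_cancel] at this
  linarith

theorem le_sub_of_normalized_step (hf : Differentiable ℝ f)
    (hlip : ∀ x y, ‖∇ f x - ∇ f y‖ ≤ L * ‖x - y‖) (x : E) {d : E} (hd : d ≠ 0)
    {η : ℝ} (hη : 0 ≤ η) :
    f (x - (η / ‖d‖) • d) ≤ f x - η * (‖d‖ - ‖d - ∇ f x‖) + L / 2 * η ^ 2 := by
  have hd_pos : 0 < ‖d‖ := norm_pos_iff.mpr hd
  have hstep : x - (η / ‖d‖) • d - x = -((η / ‖d‖) • d) := sub_sub_cancel_left _ _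
  have hnorm : ‖-((η / ‖d‖) • d)‖ = η := by
    rw [norm_neg, norm_smul, Real.norm_of_nonneg (by positivity), div_mul_cancel₀ _ hd_pos.ne']
  have hinner : η * (‖d‖ - ‖d - ∇ f x‖) ≤ ⟪∇ f x, (η / ‖d‖) • d⟫ := by
    rw [real_inner_smul_right, div_mul_eq_mul_div, le_div_iff₀ hd_pos]
    nlinarith [norm_mul_sub_norm_sub_le_inner (∇ f x) d]
  have := le_add_inner_gradient_add_sq hf hlip x (x - (η / ‖d‖) • d)
  rw [hstep, hnorm, inner_neg_right] at this
  linarith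

end InnerProductSpace

/-- One step of normalized gradient descent with an estimated gradient of large norm:
if `F` is `L`-smooth, `‖d‖ ≥ ε`, `‖d − ∇F(x)‖ ≤ ε/2`, `0 < η ≤ ε/(2L)` and
`x' = x − (η/‖d‖) d`, then `F(x') ≤ F(x) − ηε/8`. -/
theorem normalized_gd_step_decrease
    {dim : ℕ} (F : EuclideanSpace ℝ (Fin dim) → ℝ) (L ε : ℝ) (hε : 0 < ε)
    (hdiff : Differentiable ℝ F)
    (hlip : ∀ x y, ‖gradient F x - gradient F y‖ ≤ L * ‖x - y‖)
    (x d : EuclideanSpace ℝ (Fin dim))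
    (hd : ε ≤ ‖d‖) (herr : ‖d - gradient F x‖ ≤ ε / 2)
    (η : ℝ) (hη0 : 0 < η) (hη : η ≤ ε / (2 * L))
    (x' : EuclideanSpace ℝ (Fin dim)) (hx' : x' = x - (η / ‖d‖) • d) :
    F x' ≤ F x - η * ε / 8 := by
  have hL : 0 < L := by
    by_contra! hL
    linarith [div_nonpos_of_nonneg_of_nonpos hε.le (by linarith : 2 * L ≤ 0)]
  have hLη : L * η ≤ ε / 2 := by
    rw [le_div_iff₀ (by positivity)] at hη
    linarith
  have hd0 : d ≠ 0 := norm_pos_iff.mp (hε.trans_le hd)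
  have hstep := le_sub_of_normalized_step hdiff hlip x hd0 hη0.le
  have hgain : ε / 2 ≤ ‖d‖ - ‖d - gradient F x‖ := by linarith
  rw [← hx'] at hstep
  nlinarith [mul_le_mul_of_nonneg_left hLη hη0.le, mul_le_mul_of_nonneg_left hgain hη0.le]
end
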